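/- arXiv:math/0401390 — 8 statements merged into one kernel-verified Lean document; each statement's English description precedes it below -/
import Mathlib

section
/- Let H₁, H₂ be Hilbert spaces with unit vectors Ω₁ ∈ H₁, Ω₂ ∈ H₂, and let P₂ be the orthogonal projection onto ℂΩ₂ in H₂. Define Φ(Z) = ⟨Ω₁⊗Ω₂, Z(Ω₁⊗Ω₂)⟩ for bounded operators Z on H₁⊗H₂, and embeddings J₁(X) = X ⊗ P₂, J₂(Y) = 1 ⊗ Y. Then for all bounded operators X₁, X₂ on H₁ and Y on H₂: J₁(X₁) J₂(Y) J₁(X₂) = Φ(J₂(Y)) · J₁(X₁) J₁(X₂). -/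
/-!
Since `P₂ = |Ω₂⟩⟨Ω₂|`, the compression `P₂ Y P₂` is `⟪Ω₂, Y Ω₂⟫ • P₂`, and this scalar is
`Φ(1 ⊗ Y)` because `‖Ω₁‖ = 1`. Multiplicativity of `⊗` and `P₂² = P₂` then give the identity.
-/

open InnerProductSpace ContinuousLinearMap

theorem InnerProductSpace.rankOne_mul_mul_rankOne {𝕜 E : Type*} [RCLike 𝕜]
    [SeminormedAddCommGroup E] [InnerProductSpace 𝕜 E] (x y : E) (T : E →L[𝕜] E) :
    rankOne 𝕜 x y * T * rankOne 𝕜 x y = ⟪y, T x⟫_𝕜 • rankOne 𝕜 x y := by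
  rw [mul_assoc, mul_def, mul_def, comp_rankOne, rankOne_comp_rankOne]

theorem monotone_product_middle_reduction_general
    {H₁ H₂ H : Type*}
    [NormedAddCommGroup H₁] [InnerProductSpace ℂ H₁]
    [NormedAddCommGroup H₂] [InnerProductSpace ℂ H₂]
    [NormedAddCommGroup H] [InnerProductSpace ℂ H]
    (Ω₁ : H₁) (hΩ₁ : ‖Ω₁‖ = 1) (Ω₂ : H₂) (hΩ₂ : ‖Ω₂‖ = 1)
    (Ω : H)
    -- `tens A B` represents the tensor product operator `A ⊗ B` on `H = H₁ ⊗ H₂`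
    (tens : (H₁ →L[ℂ] H₁) →ₗ[ℂ] (H₂ →L[ℂ] H₂) →ₗ[ℂ] (H →L[ℂ] H))
    (htensMul : ∀ (A C : H₁ →L[ℂ] H₁) (B D : H₂ →L[ℂ] H₂),
      tens A B * tens C D = tens (A * C) (B * D))
    (htensState : ∀ (A : H₁ →L[ℂ] H₁) (B : H₂ →L[ℂ] H₂),
      ⟪Ω, (tens A B) Ω⟫_ℂ = ⟪Ω₁, A Ω₁⟫_ℂ * ⟪Ω₂, B Ω₂⟫_ℂ)
    -- `P₂` is the orthogonal projection onto `ℂ Ω₂`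
    (P₂ : H₂ →L[ℂ] H₂) (hP₂ : ∀ y : H₂, P₂ y = ⟪Ω₂, y⟫_ℂ • Ω₂)
    (X₁ X₂ : H₁ →L[ℂ] H₁) (Y : H₂ →L[ℂ] H₂) :
    tens X₁ P₂ * tens 1 Y * tens X₂ P₂
      = ⟪Ω, (tens 1 Y) Ω⟫_ℂ • (tens X₁ P₂ * tens X₂ P₂) := by
  obtain rfl : P₂ = rankOne ℂ Ω₂ Ω₂ := ContinuousLinearMap.ext hP₂
  have hstate : ⟪Ω, tens 1 Y Ω⟫_ℂ = ⟪Ω₂, Y Ω₂⟫_ℂ := by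
    rw [htensState, one_apply_eq_self, inner_self_eq_one_of_norm_eq_one hΩ₁, one_mul]
  rw [htensMul, htensMul, mul_one, rankOne_mul_mul_rankOne, map_smul, hstate, htensMul,
    (isIdempotentElem_rankOne_self hΩ₂).eq]

/-- In the monotone product of two quantum probability spaces, realized on the tensor
product Hilbert space `H = H₁ ⊗ H₂` with embeddings `J₁ X = X ⊗ P₂` and `J₂ Y = 1 ⊗ Y`,
one has `J₁(X₁) J₂(Y) J₁(X₂) = Φ(J₂(Y)) • J₁(X₁) J₁(X₂)`. -/
theorem monotone_product_middle_reduction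
    {H₁ H₂ H : Type*}
    [NormedAddCommGroup H₁] [InnerProductSpace ℂ H₁] [CompleteSpace H₁]
    [NormedAddCommGroup H₂] [InnerProductSpace ℂ H₂] [CompleteSpace H₂]
    [NormedAddCommGroup H] [InnerProductSpace ℂ H] [CompleteSpace H]
    (Ω₁ : H₁) (hΩ₁ : ‖Ω₁‖ = 1) (Ω₂ : H₂) (hΩ₂ : ‖Ω₂‖ = 1)
    (Ω : H) (hΩ : ‖Ω‖ = 1)
    -- `tens A B` represents the tensor product operator `A ⊗ B` on `H = H₁ ⊗ H₂`
    (tens : (H₁ →L[ℂ] H₁) →ₗ[ℂ] (H₂ →L[ℂ] H₂) →ₗ[ℂ] (H →L[ℂ] H))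
    (htensOne : tens 1 1 = 1)
    (htensMul : ∀ (A C : H₁ →L[ℂ] H₁) (B D : H₂ →L[ℂ] H₂),
      tens A B * tens C D = tens (A * C) (B * D))
    (htensState : ∀ (A : H₁ →L[ℂ] H₁) (B : H₂ →L[ℂ] H₂),
      ⟪Ω, (tens A B) Ω⟫_ℂ = ⟪Ω₁, A Ω₁⟫_ℂ * ⟪Ω₂, B Ω₂⟫_ℂ)
    -- `P₂` is the orthogonal projection onto `ℂ Ω₂`
    (P₂ : H₂ →L[ℂ] H₂) (hP₂ : ∀ y : H₂, P₂ y = ⟪Ω₂, y⟫_ℂ • Ω₂)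
    (X₁ X₂ : H₁ →L[ℂ] H₁) (Y : H₂ →L[ℂ] H₂) :
    tens X₁ P₂ * tens 1 Y * tens X₂ P₂
      = ⟪Ω, (tens 1 Y) Ω⟫_ℂ • (tens X₁ P₂ * tens X₂ P₂) :=
  monotone_product_middle_reduction_general Ω₁ hΩ₁ Ω₂ hΩ₂ Ω tens htensMul htensState P₂ hP₂ X₁ X₂ Y
end

section
/- With the same setup (monotone product embeddings J₁(X) = X⊗P₂, J₂(Y) = 1⊗Y and vector state Φ of Ω₁⊗Ω₂), for all bounded operators X on H₁ and Y₁, Y₂ on H₂: Φ(J₂(Y₁) J₁(X) J₂(Y₂)) = Φ(J₂(Y₁)) · Φ(J₁(X)) · Φ(J₂(Y₂)). -/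
open scoped InnerProductSpace

section RankOneProjection

variable {𝕜 E : Type*} [RCLike 𝕜] [NormedAddCommGroup E] [InnerProductSpace 𝕜 E]
  {P : E →L[𝕜] E} {v : E}

theorem inner_mul_mul_apply_of_rankOne (hP : ∀ y, P y = ⟪v, y⟫_𝕜 • v) (A B : E →L[𝕜] E) :
    ⟪v, (A * P * B) v⟫_𝕜 = ⟪v, A v⟫_𝕜 * ⟪v, B v⟫_𝕜 := by
  rw [mul_apply_eq_comp, mul_apply_eq_comp, hP, map_smul,
    inner_smul_right, mul_comm]

theorem inner_apply_self_of_rankOne (hP : ∀ y, P y = ⟪v, y⟫_𝕜 • v) (hv : ‖v‖ = 1) :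
    ⟪v, P v⟫_𝕜 = 1 := by
  rw [hP, inner_smul_right, inner_self_eq_one_of_norm_eq_one hv, one_mul]

end RankOneProjection

theorem monotone_product_state_factorization_general
    {H₁ H₂ H : Type*}
    [NormedAddCommGroup H₁] [InnerProductSpace ℂ H₁]
    [NormedAddCommGroup H₂] [InnerProductSpace ℂ H₂]
    [NormedAddCommGroup H] [InnerProductSpace ℂ H]
    (Ω₁ : H₁) (hΩ₁ : ‖Ω₁‖ = 1) (Ω₂ : H₂) (hΩ₂ : ‖Ω₂‖ = 1)
    (Ω : H)
    -- `tens A B` represents the tensor product operator `A ⊗ B` on `H = H₁ ⊗ H₂`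
    (tens : (H₁ →L[ℂ] H₁) →ₗ[ℂ] (H₂ →L[ℂ] H₂) →ₗ[ℂ] (H →L[ℂ] H))
    (htensMul : ∀ (A C : H₁ →L[ℂ] H₁) (B D : H₂ →L[ℂ] H₂),
      tens A B * tens C D = tens (A * C) (B * D))
    (htensState : ∀ (A : H₁ →L[ℂ] H₁) (B : H₂ →L[ℂ] H₂),
      ⟪Ω, (tens A B) Ω⟫_ℂ = ⟪Ω₁, A Ω₁⟫_ℂ * ⟪Ω₂, B Ω₂⟫_ℂ)
    (P₂ : H₂ →L[ℂ] H₂) (hP₂ : ∀ y : H₂, P₂ y = ⟪Ω₂, y⟫_ℂ • Ω₂)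
    (X : H₁ →L[ℂ] H₁) (Y₁ Y₂ : H₂ →L[ℂ] H₂) :
    ⟪Ω, (tens 1 Y₁ * tens X P₂ * tens 1 Y₂) Ω⟫_ℂ
      = ⟪Ω, (tens 1 Y₁) Ω⟫_ℂ * ⟪Ω, (tens X P₂) Ω⟫_ℂ * ⟪Ω, (tens 1 Y₂) Ω⟫_ℂ := by
  rw [htensMul, htensMul, one_mul, mul_one, htensState, htensState, htensState, htensState,
    inner_mul_mul_apply_of_rankOne hP₂, inner_apply_self_of_rankOne hP₂ hΩ₂,
    one_apply_eq_self, inner_self_eq_one_of_norm_eq_one hΩ₁]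
  ring

/-- In the monotone product (embeddings `J₁ X = X ⊗ P₂`, `J₂ Y = 1 ⊗ Y`, vector state `Φ`
of `Ω = Ω₁ ⊗ Ω₂`), one has `Φ(J₂(Y₁) J₁(X) J₂(Y₂)) = Φ(J₂(Y₁)) Φ(J₁(X)) Φ(J₂(Y₂))`. -/
theorem monotone_product_state_factorization
    {H₁ H₂ H : Type*}
    [NormedAddCommGroup H₁] [InnerProductSpace ℂ H₁] [CompleteSpace H₁]
    [NormedAddCommGroup H₂] [InnerProductSpace ℂ H₂] [CompleteSpace H₂]
    [NormedAddCommGroup H] [InnerProductSpace ℂ H] [CompleteSpace H]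
    (Ω₁ : H₁) (hΩ₁ : ‖Ω₁‖ = 1) (Ω₂ : H₂) (hΩ₂ : ‖Ω₂‖ = 1)
    (Ω : H) (hΩ : ‖Ω‖ = 1)
    -- `tens A B` represents the tensor product operator `A ⊗ B` on `H = H₁ ⊗ H₂`
    (tens : (H₁ →L[ℂ] H₁) →ₗ[ℂ] (H₂ →L[ℂ] H₂) →ₗ[ℂ] (H →L[ℂ] H))
    (htensOne : tens 1 1 = 1)
    (htensMul : ∀ (A C : H₁ →L[ℂ] H₁) (B D : H₂ →L[ℂ] H₂),
      tens A B * tens C D = tens (A * C) (B * D))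
    (htensState : ∀ (A : H₁ →L[ℂ] H₁) (B : H₂ →L[ℂ] H₂),
      ⟪Ω, (tens A B) Ω⟫_ℂ = ⟪Ω₁, A Ω₁⟫_ℂ * ⟪Ω₂, B Ω₂⟫_ℂ)
    (P₂ : H₂ →L[ℂ] H₂) (hP₂ : ∀ y : H₂, P₂ y = ⟪Ω₂, y⟫_ℂ • Ω₂)
    (X : H₁ →L[ℂ] H₁) (Y₁ Y₂ : H₂ →L[ℂ] H₂) :
    ⟪Ω, (tens 1 Y₁ * tens X P₂ * tens 1 Y₂) Ω⟫_ℂ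
      = ⟪Ω, (tens 1 Y₁) Ω⟫_ℂ * ⟪Ω, (tens X P₂) Ω⟫_ℂ * ⟪Ω, (tens 1 Y₂) Ω⟫_ℂ :=
  monotone_product_state_factorization_general Ω₁ hΩ₁ Ω₂ hΩ₂ Ω tens htensMul htensState P₂ hP₂ X Y₁
    Y₂
end

section
/- Let (A, H, Ω) be the monotone product of quantum probability spaces (A₁, H₁, Ω₁) and (A₂, H₂, Ω₂), with embeddings J₁, J₂ and the conditional expectation E₁(Z) = J₁⁻¹(PZP), where P = 1 ⊗ P₂ is the orthogonal projection onto H₁ ⊗ ℂΩ₂. Suppose Φ₁ (the vector state of Ω₁ restricted to A₁) is not identically zero and Φ(XY₁Y₂) = Φ(Y₂XY₁) holds for all X ∈ J₁(A₁), Y₁, Y₂ ∈ J₂(A₂) (i.e., Φ is a trace on the generated algebra). Then Φ₂ restricted to A₂ is multiplicative: Φ₂(Y₁Y₂) = Φ₂(Y₁)Φ₂(Y₂) for all Y₁, Y₂ ∈ A₂. -/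
open scoped InnerProductSpace

/-- In the monotone product of two quantum probability spaces, if `Φ₁` is not identically
zero on `A₁` and the product state `Φ` is a trace in the sense that
`Φ(X Y₁ Y₂) = Φ(Y₂ X Y₁)` for `X ∈ J₁(A₁)`, `Y₁, Y₂ ∈ J₂(A₂)`, then `Φ₂` is multiplicative
on `A₂`. -/
theorem trace_implies_second_state_multiplicative
    {H₁ H₂ H : Type*}
    [NormedAddCommGroup H₁] [InnerProductSpace ℂ H₁] [CompleteSpace H₁]
    [NormedAddCommGroup H₂] [InnerProductSpace ℂ H₂] [CompleteSpace H₂]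
    [NormedAddCommGroup H] [InnerProductSpace ℂ H] [CompleteSpace H]
    (Ω₁ : H₁) (hΩ₁ : ‖Ω₁‖ = 1) (Ω₂ : H₂) (hΩ₂ : ‖Ω₂‖ = 1)
    (Ω : H) (hΩ : ‖Ω‖ = 1)
    -- `tens A B` represents the tensor product operator `A ⊗ B` on `H = H₁ ⊗ H₂`
    (tens : (H₁ →L[ℂ] H₁) →ₗ[ℂ] (H₂ →L[ℂ] H₂) →ₗ[ℂ] (H →L[ℂ] H))
    (htensOne : tens 1 1 = 1)
    (htensMul : ∀ (A C : H₁ →L[ℂ] H₁) (B D : H₂ →L[ℂ] H₂),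
      tens A B * tens C D = tens (A * C) (B * D))
    (htensState : ∀ (A : H₁ →L[ℂ] H₁) (B : H₂ →L[ℂ] H₂),
      ⟪Ω, (tens A B) Ω⟫_ℂ = ⟪Ω₁, A Ω₁⟫_ℂ * ⟪Ω₂, B Ω₂⟫_ℂ)
    (P₂ : H₂ →L[ℂ] H₂) (hP₂ : ∀ y : H₂, P₂ y = ⟪Ω₂, y⟫_ℂ • Ω₂)
    -- the two subalgebras
    (A₁ : NonUnitalSubalgebra ℂ (H₁ →L[ℂ] H₁)) (A₂ : NonUnitalSubalgebra ℂ (H₂ →L[ℂ] H₂))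
    -- `Φ₁` is not identically zero on `A₁`
    (hΦ₁ : ∃ X ∈ A₁, ⟪Ω₁, X Ω₁⟫_ℂ ≠ 0)
    -- `Φ` is a trace: `Φ(X Y₁ Y₂) = Φ(Y₂ X Y₁)`
    (htrace : ∀ X ∈ A₁, ∀ Y₁ ∈ A₂, ∀ Y₂ ∈ A₂,
      ⟪Ω, (tens X P₂ * tens 1 Y₁ * tens 1 Y₂) Ω⟫_ℂ
        = ⟪Ω, (tens 1 Y₂ * tens X P₂ * tens 1 Y₁) Ω⟫_ℂ) :
    ∀ Y₁ ∈ A₂, ∀ Y₂ ∈ A₂,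
      ⟪Ω₂, (Y₁ * Y₂) Ω₂⟫_ℂ = ⟪Ω₂, Y₁ Ω₂⟫_ℂ * ⟪Ω₂, Y₂ Ω₂⟫_ℂ := by
  obtain ⟨X, hX, hXne⟩ := hΦ₁
  intro Y₁ hY₁ Y₂ hY₂
  have hΩ₂self : ⟪Ω₂, Ω₂⟫_ℂ = 1 := by
    rw [inner_self_eq_norm_sq_to_K, hΩ₂]; norm_num
  have h := htrace X hX Y₁ hY₁ Y₂ hY₂
  simp only [htensMul, htensState, mul_one, one_mul] at h
  have hL : ⟪Ω₂, (P₂ * Y₁ * Y₂) Ω₂⟫_ℂ = ⟪Ω₂, (Y₁ * Y₂) Ω₂⟫_ℂ := by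
    simp only [ContinuousLinearMap.mul_apply, hP₂, inner_smul_right, hΩ₂self, mul_one]
  have hR : ⟪Ω₂, (Y₂ * P₂ * Y₁) Ω₂⟫_ℂ = ⟪Ω₂, Y₁ Ω₂⟫_ℂ * ⟪Ω₂, Y₂ Ω₂⟫_ℂ := by
    simp only [ContinuousLinearMap.mul_apply, hP₂, map_smul, inner_smul_right]
  rw [hL, hR] at h
  exact mul_left_cancel₀ hXne h
end

section
/- Let X₁ ∈ B(H₁) and X₂ ∈ B(H₂) be self-adjoint bounded operators, and consider their images (again denoted X₁, X₂) in the monotone product: X₁ acts as X₁⊗P₂ and X₂ as 1⊗X₂ on H₁⊗H₂, with P = 1⊗P₂ and H_{X₂}(z) = 1/⟨Ω₂, (z−X₂)⁻¹Ω₂⟩ the reciprocal Cauchy transform of X₂ in the vector state of Ω₂. Then for all complex z with |z| > ‖X₁‖ + ‖X₂‖: P (z − (X₁⊗P₂ + 1⊗X₂))⁻¹ P = (H_{X₂}(z) − X₁)⁻¹ ⊗ P₂. -/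
open scoped InnerProductSpace

/-! With `r = (z - X₂)⁻¹` and `G = ⟪Ω₂, r Ω₂⟫`, the rank-one projection satisfies
`P₂ r P₂ = G • P₂`. This makes the inverse of `1 ⊗ (z - X₂) - X₁ ⊗ P₂` explicit, a Woodbury-type
formula: `1 ⊗ r + (G⁻¹ - X₁)⁻¹ X₁ ⊗ G⁻¹ r P₂ r`, whose compression by `1 ⊗ P₂` is
`(G⁻¹ - X₁)⁻¹ ⊗ P₂`. The bound on `|z|` makes `z - X₂` invertible, and writing
`G = ⟪(z - X₂) w, w⟫` with `w = r Ω₂` gives `0 < |G|` and `|G| (|z| - ‖X₂‖) ≤ 1`, hence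
`|G| ‖X₁‖ < 1`, so `G⁻¹ - X₁` is invertible as well. -/

section TensorCompression

variable {R A₁ A₂ B : Type*} [CommRing R] [Ring A₁] [Algebra R A₁] [Ring A₂] [Algebra R A₂]
  [Ring B] [Algebra R B]

theorem inverse_tens_one_sub_tens (tens : A₁ →ₗ[R] A₂ →ₗ[R] B) (h_one : tens 1 1 = 1)
    (h_mul : ∀ a c b d, tens a b * tens c d = tens (a * c) (b * d))
    {s p : A₂} {x : A₁} {c : R} (hs : IsUnit s) (hp : c • (p * Ring.inverse s * p) = p)
    (hu : IsUnit (c • 1 - x)) :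
    Ring.inverse (tens 1 s - tens x p) =
      tens 1 (Ring.inverse s) +
        tens (Ring.inverse (c • 1 - x) * x) (c • (Ring.inverse s * p * Ring.inverse s)) := by
  set r := Ring.inverse s
  set d := Ring.inverse (c • 1 - x)
  have hsr : s * r = 1 := Ring.mul_inverse_cancel s hs
  have hrs : r * s = 1 := Ring.inverse_mul_cancel s hs
  have hud : (c • 1 - x) * (d * x) = x := by
    rw [← mul_assoc, Ring.mul_inverse_cancel _ hu, one_mul]
  have hdu : d * x * (c • 1 - x) = x := by
    calc d * x * (c • 1 - x) = d * (c • 1 - x) * x := by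
          simp only [mul_sub, sub_mul, mul_smul_comm, smul_mul_assoc, mul_one, mul_assoc]
      _ = x := by rw [Ring.inverse_mul_cancel _ hu, one_mul]
  have hsK : s * (c • (r * p * r)) = c • (p * r) := by
    rw [mul_smul_comm, ← mul_assoc, ← mul_assoc, hsr, one_mul]
  have hpK : p * (c • (r * p * r)) = p * r := by
    rw [mul_smul_comm, ← mul_assoc, ← mul_assoc, ← smul_mul_assoc, hp]
  have hKs : c • (r * p * r) * s = c • (r * p) := by
    rw [smul_mul_assoc, mul_assoc, hrs, mul_one]
  have hKp : c • (r * p * r) * p = r * p := by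
    rw [smul_mul_assoc, mul_assoc, mul_assoc, ← mul_smul_comm, ← mul_assoc, hp]
  refine Ring.inverse_unit ⟨_, _, ?_, ?_⟩
  · calc (tens 1 s - tens x p) * (tens 1 r + tens (d * x) (c • (r * p * r)))
        = 1 + tens ((c • 1 - x) * (d * x) - x) (p * r) := by
          simp only [sub_mul, mul_add, h_mul, one_mul, mul_one, hsr, hsK, hpK]
          simp only [map_sub, map_smul, LinearMap.sub_apply, LinearMap.smul_apply, smul_mul_assoc,
            one_mul, h_one]
          abel
      _ = 1 := by rw [hud, sub_self, map_zero, LinearMap.zero_apply, add_zero]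
  · calc (tens 1 r + tens (d * x) (c • (r * p * r))) * (tens 1 s - tens x p)
        = 1 + tens (d * x * (c • 1 - x) - x) (r * p) := by
          simp only [mul_sub, add_mul, h_mul, one_mul, mul_one, hrs, hKs, hKp]
          simp only [map_sub, map_smul, LinearMap.sub_apply, LinearMap.smul_apply, mul_smul_comm,
            mul_one, h_one]
          abel
      _ = 1 := by rw [hdu, sub_self, map_zero, LinearMap.zero_apply, add_zero]

theorem tens_one_mul_inverse_mul_tens_one (tens : A₁ →ₗ[R] A₂ →ₗ[R] B) (h_one : tens 1 1 = 1)
    (h_mul : ∀ a c b d, tens a b * tens c d = tens (a * c) (b * d))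
    {s p : A₂} {x : A₁} {c : R} (hs : IsUnit s) (hp : c • (p * Ring.inverse s * p) = p)
    (hu : IsUnit (c • 1 - x)) :
    tens 1 p * Ring.inverse (tens 1 s - tens x p) * tens 1 p =
      tens (Ring.inverse (c • 1 - x)) p := by
  rw [inverse_tens_one_sub_tens tens h_one h_mul hs hp hu]
  set r := Ring.inverse s
  set d := Ring.inverse (c • 1 - x)
  have hpKp : p * (c • (r * p * r)) * p = p * r * p := by
    rw [mul_smul_comm, smul_mul_assoc, ← mul_assoc, ← mul_assoc, ← smul_mul_assoc,
      ← smul_mul_assoc, hp]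
  have hd : 1 + d * x = c • d := by
    rw [← Ring.inverse_mul_cancel _ hu, mul_sub, mul_smul_comm, mul_one, sub_add_cancel]
  calc tens 1 p * (tens 1 r + tens (d * x) (c • (r * p * r))) * tens 1 p
      = tens (1 + d * x) (p * r * p) := by
        simp only [mul_add, add_mul, h_mul, one_mul, mul_one, hpKp, map_add, LinearMap.add_apply]
    _ = tens d p := by
        rw [hd, map_smul, LinearMap.smul_apply, ← map_smul, hp]

end TensorCompression

theorem ContinuousLinearMap.isUnit_smul_one_sub_of_norm_lt {𝕜 E : Type*}
    [NontriviallyNormedField 𝕜] [NormedAddCommGroup E] [NormedSpace 𝕜 E] [CompleteSpace E]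
    {X : E →L[𝕜] E} {z : 𝕜} (hz : ‖X‖ < ‖z‖) : IsUnit (z • (1 : E →L[𝕜] E) - X) := by
  rw [← Algebra.algebraMap_eq_smul_one, ← spectrum.mem_resolventSet_iff]
  exact spectrum.mem_resolventSet_of_norm_lt_mul
    ((mul_le_of_le_one_right (norm_nonneg X) norm_id_le).trans_lt hz)

theorem ContinuousLinearMap.norm_sub_norm_mul_norm_le {𝕜 E : Type*} [NontriviallyNormedField 𝕜]
    [SeminormedAddCommGroup E] [NormedSpace 𝕜 E] (X : E →L[𝕜] E) (z : 𝕜) (w : E) :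
    (‖z‖ - ‖X‖) * ‖w‖ ≤ ‖z • w - X w‖ :=
  calc (‖z‖ - ‖X‖) * ‖w‖ = ‖z • w‖ - ‖X‖ * ‖w‖ := by rw [norm_smul, sub_mul]
    _ ≤ ‖z • w‖ - ‖X w‖ := by gcongr; exact X.le_opNorm w
    _ ≤ ‖z • w - X w‖ := norm_sub_norm_le _ _

section CauchyTransform

variable {𝕜 E : Type*} [RCLike 𝕜] [NormedAddCommGroup E] [InnerProductSpace 𝕜 E]

theorem ContinuousLinearMap.norm_sub_norm_mul_norm_sq_le_norm_inner (X : E →L[𝕜] E) (z : 𝕜)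
    (w : E) : (‖z‖ - ‖X‖) * ‖w‖ ^ 2 ≤ ‖⟪z • w - X w, w⟫_𝕜‖ :=
  calc (‖z‖ - ‖X‖) * ‖w‖ ^ 2 = ‖⟪z • w, w⟫_𝕜‖ - ‖X‖ * ‖w‖ * ‖w‖ := by
        rw [inner_smul_left, inner_self_eq_norm_sq_to_K, norm_mul, RCLike.norm_conj, norm_pow,
          RCLike.norm_ofReal, abs_norm]
        ring
    _ ≤ ‖⟪z • w, w⟫_𝕜‖ - ‖⟪X w, w⟫_𝕜‖ := by
        gcongr
        exact (norm_inner_le_norm _ _).trans (by gcongr; exact X.le_opNorm w)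
    _ ≤ ‖⟪z • w - X w, w⟫_𝕜‖ := by rw [inner_sub_left]; exact norm_sub_norm_le _ _

noncomputable def cauchyTransform (X : E →L[𝕜] E) (Ω : E) (z : 𝕜) : 𝕜 :=
  ⟪Ω, Ring.inverse (z • (1 : E →L[𝕜] E) - X) Ω⟫_𝕜

variable [CompleteSpace E] {X : E →L[𝕜] E} {z : 𝕜}

theorem smul_inverse_apply_sub_apply_inverse_apply (hz : ‖X‖ < ‖z‖) (y : E) :
    z • Ring.inverse (z • 1 - X) y - X (Ring.inverse (z • 1 - X) y) = y := by
  simpa using congrArg (· y) (Ring.mul_inverse_cancel _ (X.isUnit_smul_one_sub_of_norm_lt hz))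

theorem cauchyTransform_ne_zero (hz : ‖X‖ < ‖z‖) {Ω : E} (hΩ : Ω ≠ 0) :
    cauchyTransform X Ω z ≠ 0 := by
  set w := Ring.inverse (z • 1 - X) Ω
  have hw : z • w - X w = Ω := smul_inverse_apply_sub_apply_inverse_apply hz Ω
  have hw₀ : w ≠ 0 := by rintro hw₀; simp [hw₀, eq_comm, hΩ] at hw
  have hG : cauchyTransform X Ω z = ⟪z • w - X w, w⟫_𝕜 := by rw [hw]; rfl
  rw [← norm_pos_iff, hG]
  exact (mul_pos (sub_pos.2 hz) (pow_pos (norm_pos_iff.2 hw₀) 2)).trans_le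
    (X.norm_sub_norm_mul_norm_sq_le_norm_inner z w)

theorem norm_cauchyTransform_mul_le (hz : ‖X‖ < ‖z‖) (Ω : E) :
    ‖cauchyTransform X Ω z‖ * (‖z‖ - ‖X‖) ≤ ‖Ω‖ ^ 2 := by
  set w := Ring.inverse (z • 1 - X) Ω
  have hw : (‖z‖ - ‖X‖) * ‖w‖ ≤ ‖Ω‖ := by
    simpa only [w, smul_inverse_apply_sub_apply_inverse_apply hz Ω]
      using X.norm_sub_norm_mul_norm_le z w
  calc ‖cauchyTransform X Ω z‖ * (‖z‖ - ‖X‖) ≤ ‖Ω‖ * ‖w‖ * (‖z‖ - ‖X‖) :=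
        mul_le_mul_of_nonneg_right (norm_inner_le_norm _ _) (sub_nonneg.2 hz.le)
    _ ≤ ‖Ω‖ ^ 2 := by nlinarith [norm_nonneg Ω]

end CauchyTransform

theorem ContinuousLinearMap.mul_mul_eq_inner_smul_of_apply_eq_inner_smul {𝕜 E : Type*} [RCLike 𝕜]
    [NormedAddCommGroup E] [InnerProductSpace 𝕜 E] {P : E →L[𝕜] E} {Ω : E}
    (hP : ∀ y, P y = ⟪Ω, y⟫_𝕜 • Ω) (A : E →L[𝕜] E) : P * A * P = ⟪Ω, A Ω⟫_𝕜 • P := by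
  ext y
  simp only [mul_apply_eq_comp, smul_apply, hP, map_smul, smul_smul, mul_comm]

theorem compressed_resolvent_eq_reciprocal_cauchy_general
    {H₁ H₂ H : Type*}
    [NormedAddCommGroup H₁] [InnerProductSpace ℂ H₁] [CompleteSpace H₁]
    [NormedAddCommGroup H₂] [InnerProductSpace ℂ H₂] [CompleteSpace H₂]
    [NormedAddCommGroup H] [InnerProductSpace ℂ H] [CompleteSpace H]
    (Ω₂ : H₂) (hΩ₂ : ‖Ω₂‖ = 1)
    -- `tens A B` represents the tensor product operator `A ⊗ B` on `H = H₁ ⊗ H₂`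
    (tens : (H₁ →L[ℂ] H₁) →ₗ[ℂ] (H₂ →L[ℂ] H₂) →ₗ[ℂ] (H →L[ℂ] H))
    (htensOne : tens 1 1 = 1)
    (htensMul : ∀ (A C : H₁ →L[ℂ] H₁) (B D : H₂ →L[ℂ] H₂),
      tens A B * tens C D = tens (A * C) (B * D))
    (P₂ : H₂ →L[ℂ] H₂) (hP₂ : ∀ y : H₂, P₂ y = ⟪Ω₂, y⟫_ℂ • Ω₂)
    (X₁ : H₁ →L[ℂ] H₁) (X₂ : H₂ →L[ℂ] H₂)
    (z : ℂ) (hz : ‖X₁‖ + ‖X₂‖ < ‖z‖) :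
    tens 1 P₂ *
        Ring.inverse (z • (1 : H →L[ℂ] H) - (tens X₁ P₂ + tens 1 X₂)) *
        tens 1 P₂
      = tens
          (Ring.inverse
            ((⟪Ω₂, (Ring.inverse (z • (1 : H₂ →L[ℂ] H₂) - X₂)) Ω₂⟫_ℂ)⁻¹ • (1 : H₁ →L[ℂ] H₁)
              - X₁))
          P₂ := by
  set G := cauchyTransform X₂ Ω₂ z
  have hzX₂ : ‖X₂‖ < ‖z‖ := by linarith [norm_nonneg X₁]
  have hG : G ≠ 0 := cauchyTransform_ne_zero hzX₂ (norm_ne_zero_iff.1 (by simp [hΩ₂]))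
  have hX₁G : ‖X₁‖ < ‖G⁻¹‖ := by
    rw [norm_inv, ← one_div, lt_div_iff₀ (norm_pos_iff.2 hG)]
    calc ‖X₁‖ * ‖G‖ < (‖z‖ - ‖X₂‖) * ‖G‖ :=
          mul_lt_mul_of_pos_right (by linarith) (norm_pos_iff.2 hG)
      _ ≤ 1 := by simpa [mul_comm, hΩ₂] using norm_cauchyTransform_mul_le hzX₂ Ω₂
  have hP₂G : G⁻¹ • (P₂ * Ring.inverse (z • 1 - X₂) * P₂) = P₂ := by
    rw [P₂.mul_mul_eq_inner_smul_of_apply_eq_inner_smul hP₂, smul_smul, ← cauchyTransform,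
      inv_mul_cancel₀ hG, one_smul]
  have hT : z • 1 - (tens X₁ P₂ + tens 1 X₂) = tens 1 (z • 1 - X₂) - tens X₁ P₂ := by
    rw [map_sub, map_smul, htensOne]
    abel
  rw [hT]
  exact tens_one_mul_inverse_mul_tens_one tens htensOne htensMul
    (X₂.isUnit_smul_one_sub_of_norm_lt hzX₂) hP₂G (X₁.isUnit_smul_one_sub_of_norm_lt hX₁G)

/-- For monotonically independent self-adjoint operators `X₁ ⊗ P₂` and `1 ⊗ X₂` on
`H = H₁ ⊗ H₂`, with `P = 1 ⊗ P₂`, and `|z| > ‖X₁‖ + ‖X₂‖`: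
`P (z − (X₁⊗P₂ + 1⊗X₂))⁻¹ P = (H_{X₂}(z) − X₁)⁻¹ ⊗ P₂`, where
`H_{X₂}(z) = 1/⟪Ω₂, (z − X₂)⁻¹ Ω₂⟫` is the reciprocal Cauchy transform of `X₂`. -/
theorem compressed_resolvent_eq_reciprocal_cauchy
    {H₁ H₂ H : Type*}
    [NormedAddCommGroup H₁] [InnerProductSpace ℂ H₁] [CompleteSpace H₁]
    [NormedAddCommGroup H₂] [InnerProductSpace ℂ H₂] [CompleteSpace H₂]
    [NormedAddCommGroup H] [InnerProductSpace ℂ H] [CompleteSpace H]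
    (Ω₁ : H₁) (hΩ₁ : ‖Ω₁‖ = 1) (Ω₂ : H₂) (hΩ₂ : ‖Ω₂‖ = 1)
    (Ω : H) (hΩ : ‖Ω‖ = 1)
    -- `tens A B` represents the tensor product operator `A ⊗ B` on `H = H₁ ⊗ H₂`
    (tens : (H₁ →L[ℂ] H₁) →ₗ[ℂ] (H₂ →L[ℂ] H₂) →ₗ[ℂ] (H →L[ℂ] H))
    (htensOne : tens 1 1 = 1)
    (htensMul : ∀ (A C : H₁ →L[ℂ] H₁) (B D : H₂ →L[ℂ] H₂),
      tens A B * tens C D = tens (A * C) (B * D))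
    (htensState : ∀ (A : H₁ →L[ℂ] H₁) (B : H₂ →L[ℂ] H₂),
      ⟪Ω, (tens A B) Ω⟫_ℂ = ⟪Ω₁, A Ω₁⟫_ℂ * ⟪Ω₂, B Ω₂⟫_ℂ)
    (htensStar : ∀ (A : H₁ →L[ℂ] H₁) (B : H₂ →L[ℂ] H₂),
      star (tens A B) = tens (star A) (star B))
    (P₂ : H₂ →L[ℂ] H₂) (hP₂ : ∀ y : H₂, P₂ y = ⟪Ω₂, y⟫_ℂ • Ω₂)
    (X₁ : H₁ →L[ℂ] H₁) (X₂ : H₂ →L[ℂ] H₂)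
    (hX₁ : IsSelfAdjoint X₁) (hX₂ : IsSelfAdjoint X₂)
    (z : ℂ) (hz : ‖X₁‖ + ‖X₂‖ < ‖z‖) :
    tens 1 P₂ *
        Ring.inverse (z • (1 : H →L[ℂ] H) - (tens X₁ P₂ + tens 1 X₂)) *
        tens 1 P₂
      = tens
          (Ring.inverse
            ((⟪Ω₂, (Ring.inverse (z • (1 : H₂ →L[ℂ] H₂) - X₂)) Ω₂⟫_ℂ)⁻¹ • (1 : H₁ →L[ℂ] H₁)
              - X₁))
          P₂ :=
  compressed_resolvent_eq_reciprocal_cauchy_general Ω₂ hΩ₂ tens htensOne htensMul P₂ hP₂ X₁ X₂ z hz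
end

section
/- Let μ, ν, λ be probability measures on ℝ with Cauchy transforms G_μ, G_ν, G_λ and reciprocal Cauchy transforms H = 1/G. Suppose λ is given by the disintegration formula λ(·) = ∫_ℝ ν_y(·) dμ(y), where for each y ∈ ℝ, ν_y is a probability measure with H_{ν_y}(z) = H_ν(z) − y on ℂ⁺. Then H_λ(z) = H_μ(H_ν(z)) for all z ∈ ℂ⁺, i.e., λ is the monotone convolution μ ▷ ν. -/
/-!
Disintegrating `λ` along `μ` turns its Cauchy transform into an average of the Cauchy
transforms of the `ν_y`: `G_λ(z) = ∫ G_{ν_y}(z) dμ(y)`, which is legitimate because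
`x ↦ (z - x)⁻¹` is bounded by `1 / Im z` and `λ` is finite. By hypothesis
`G_{ν_y}(z) = (H_ν(z) - y)⁻¹`, so the average is `G_μ(H_ν(z))`.
-/

open MeasureTheory ProbabilityTheory

theorem MeasureTheory.Measure.integral_comp {α β E : Type*} [MeasurableSpace α]
    [MeasurableSpace β] [NormedAddCommGroup E] [NormedSpace ℝ E] {μ : Measure α}
    {κ : Kernel α β} {f : β → E} (hf : Integrable f (κ ∘ₘ μ)) :
    ∫ b, f b ∂(κ ∘ₘ μ) = ∫ a, ∫ b, f b ∂κ a ∂μ := by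
  rw [Measure.comp_eq_comp_const_apply] at hf ⊢
  rw [Kernel.integral_comp hf, Kernel.const_apply]

namespace Complex

lemma norm_inv_sub_ofReal_le {z : ℂ} (hz : 0 < z.im) (x : ℝ) : ‖(z - x)⁻¹‖ ≤ z.im⁻¹ := by
  have him_le : z.im ≤ ‖z - x‖ := by
    simpa [abs_of_pos hz] using abs_im_le_norm (z - x)
  rw [norm_inv]
  exact inv_anti₀ hz him_le

lemma integrable_inv_sub_ofReal (ρ : Measure ℝ) [IsFiniteMeasure ρ] {z : ℂ} (hz : 0 < z.im) :
    Integrable (fun x : ℝ => (z - x)⁻¹) ρ :=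
  Integrable.mono' (integrable_const z.im⁻¹)
    (measurable_const.sub measurable_ofReal).inv.aestronglyMeasurable
    (Filter.Eventually.of_forall (norm_inv_sub_ofReal_le hz))

end Complex

theorem monotoneConvolution_reciprocalCauchy_comp_general
    (μ ν lam : Measure ℝ)
    [IsProbabilityMeasure lam]
    (νy : ℝ → Measure ℝ)
    (hνyMeas : Measurable νy)
    (hνy : ∀ (y : ℝ) (z : ℂ), 0 < z.im →
      (∫ x : ℝ, (z - (x : ℂ))⁻¹ ∂(νy y))⁻¹
        = (∫ x : ℝ, (z - (x : ℂ))⁻¹ ∂ν)⁻¹ - (y : ℂ))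
    (hlam : ∀ s : Set ℝ, MeasurableSet s → lam s = ∫⁻ y, νy y s ∂μ) :
    ∀ z : ℂ, 0 < z.im →
      (∫ x : ℝ, (z - (x : ℂ))⁻¹ ∂lam)⁻¹
        = (∫ x : ℝ, ((∫ u : ℝ, (z - (u : ℂ))⁻¹ ∂ν)⁻¹ - (x : ℂ))⁻¹ ∂μ)⁻¹ := by
  intro z hz
  let κ : Kernel ℝ ℝ := ⟨νy, hνyMeas⟩
  have hlam_comp : lam = κ ∘ₘ μ := by
    ext s hs
    rw [hlam s hs, Measure.bind_apply hs κ.aemeasurable]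
    rfl
  have hG : ∀ y, ∫ x : ℝ, (z - (x : ℂ))⁻¹ ∂(νy y)
      = ((∫ x : ℝ, (z - (x : ℂ))⁻¹ ∂ν)⁻¹ - (y : ℂ))⁻¹ := fun y => by
    rw [← hνy y z hz, inv_inv]
  have hint := Complex.integrable_inv_sub_ofReal lam hz
  rw [hlam_comp] at hint ⊢
  rw [Measure.integral_comp hint]
  exact congrArg _ (integral_congr_ae (Filter.Eventually.of_forall hG))

/-- If `λ = ∫ ν_y dμ(y)` where each `ν_y` has reciprocal Cauchy transform
`H_ν(z) − y`, then `H_λ = H_μ ∘ H_ν` on the upper half plane, i.e. `λ = μ ▷ ν`. -/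
theorem monotoneConvolution_reciprocalCauchy_comp
    (μ ν lam : Measure ℝ)
    [IsProbabilityMeasure μ] [IsProbabilityMeasure ν] [IsProbabilityMeasure lam]
    (νy : ℝ → Measure ℝ) (hνyProb : ∀ y, IsProbabilityMeasure (νy y))
    (hνyMeas : Measurable νy)
    (hνy : ∀ (y : ℝ) (z : ℂ), 0 < z.im →
      (∫ x : ℝ, (z - (x : ℂ))⁻¹ ∂(νy y))⁻¹
        = (∫ x : ℝ, (z - (x : ℂ))⁻¹ ∂ν)⁻¹ - (y : ℂ))
    (hlam : ∀ s : Set ℝ, MeasurableSet s → lam s = ∫⁻ y, νy y s ∂μ) :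
    ∀ z : ℂ, 0 < z.im →
      (∫ x : ℝ, (z - (x : ℂ))⁻¹ ∂lam)⁻¹
        = (∫ x : ℝ, ((∫ u : ℝ, (z - (u : ℂ))⁻¹ ∂ν)⁻¹ - (x : ℂ))⁻¹ ∂μ)⁻¹ :=
  monotoneConvolution_reciprocalCauchy_comp_general μ ν lam νy hνyMeas hνy hlam
end

section
/- Let ρ be a compactly supported finite positive measure on ℝ, a ∈ ℝ, and define L(f) = −a f'(0) + ∫_ℝ (f(x) − f(0) − x f'(0)) x⁻² dρ(x) for f ∈ C_b²(ℝ) (where the integrand at x = 0 is interpreted as f''(0)/2). With ε(f) = f(0) and η(f)(x) = (f(x)−f(0))/x (η(f)(0) = f'(0)), the coboundary identity L(fg) = f(0) L(g) + ⟨η(f̄), η(g)⟩_{L²(ρ)} + L(f) g(0) holds for all f, g ∈ C_b²(ℝ). -/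
open MeasureTheory ComplexConjugate

/-- The cocycle map: `η(f)(x) = (f(x) − f(0))/x` for `x ≠ 0` and `η(f)(0) = f'(0)`. -/
noncomputable def etaCocycle (f : ℝ → ℂ) : ℝ → ℂ :=
  fun x => if x = 0 then deriv f 0 else (f x - f 0) / x

/-- The generator `L(f) = −a f'(0) + ∫ (f(x) − f(0) − x f'(0)) x⁻² dρ(x)`, with the
integrand at `x = 0` interpreted as `f''(0)/2`. -/
noncomputable def genL (a : ℝ) (ρ : Measure ℝ) (f : ℝ → ℂ) : ℂ :=
  -(a : ℂ) * deriv f 0 +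
    ∫ x : ℝ, (if x = 0 then deriv (deriv f) 0 / 2
      else (f x - f 0 - (x : ℂ) * deriv f 0) / (x : ℂ) ^ 2) ∂ρ

/-!
The identity holds already between the integrands: for `x ≠ 0`,
`(fg)(x) − (fg)(0) − x (fg)'(0)
  = f(0) [g(x) − g(0) − x g'(0)] + (f(x) − f(0)) (g(x) − g(0)) + [f(x) − f(0) − x f'(0)] g(0)`,
and at `x = 0` the Leibniz rule `(fg)'' = f''g + 2f'g' + fg''` splits `(fg)''(0)/2` the same way.
Integrating is legitimate because, by the mean value theorem and a first-order Taylor estimate,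
all integrands are bounded and `ρ` is finite; the drift term splits by the product rule.
-/

noncomputable def genLKernel (f : ℝ → ℂ) (x : ℝ) : ℂ :=
  if x = 0 then deriv (deriv f) 0 / 2 else (f x - f 0 - (x : ℂ) * deriv f 0) / (x : ℂ) ^ 2

lemma genL_eq_integral_genLKernel (a : ℝ) (ρ : Measure ℝ) (f : ℝ → ℂ) :
    genL a ρ f = -(a : ℂ) * deriv f 0 + ∫ x, genLKernel f x ∂ρ :=
  rfl

section Bounds

variable {h : ℝ → ℂ} {C C₁ C₂ : ℝ}

lemma norm_sub_apply_zero_le (hh : Differentiable ℝ h) (hC : ∀ t, ‖deriv h t‖ ≤ C) (x : ℝ) :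
    ‖h x - h 0‖ ≤ C * |x| := by
  simpa using Convex.norm_image_sub_le_of_norm_deriv_le (fun t _ => hh t) (fun t _ => hC t)
    convex_univ (Set.mem_univ 0) (Set.mem_univ x)

lemma norm_taylor_remainder_le (hh : ContDiff ℝ 2 h) (hC : ∀ t, ‖deriv (deriv h) t‖ ≤ C)
    (x : ℝ) : ‖h x - h 0 - (x : ℂ) * deriv h 0‖ ≤ C * x ^ 2 := by
  set F : ℝ → ℂ := fun t => h t - (t : ℂ) * deriv h 0
  have hF : ∀ t, HasDerivAt F (deriv h t - deriv h 0) t := fun t => by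
    have hlin : HasDerivAt (fun t : ℝ => (t : ℂ) * deriv h 0) (deriv h 0) t := by
      simpa using (hasDerivAt_id t).ofReal_comp.mul_const (deriv h 0)
    exact (hh.differentiable two_ne_zero t).hasDerivAt.sub hlin
  have hF' : ∀ t ∈ Set.uIcc 0 x, ‖deriv F t‖ ≤ C * |x| := fun t ht => by
    rw [(hF t).deriv]
    refine (norm_sub_apply_zero_le hh.differentiable_deriv_two hC t).trans ?_
    have hC0 : 0 ≤ C := (norm_nonneg _).trans (hC 0)
    exact mul_le_mul_of_nonneg_left (by simpa using Set.abs_sub_left_of_mem_uIcc ht) hC0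
  have := Convex.norm_image_sub_le_of_norm_deriv_le (fun t _ => (hF t).differentiableAt) hF'
    (convex_uIcc 0 x) Set.left_mem_uIcc Set.right_mem_uIcc
  simp only [F, Complex.ofReal_zero, zero_mul, sub_zero, Real.norm_eq_abs] at this
  rwa [sub_right_comm, mul_assoc, abs_mul_abs_self, ← sq] at this

lemma norm_etaCocycle_le (hh : Differentiable ℝ h) (hC : ∀ t, ‖deriv h t‖ ≤ C) (x : ℝ) :
    ‖etaCocycle h x‖ ≤ C := by
  rcases eq_or_ne x 0 with rfl | hx
  · simpa [etaCocycle] using hC 0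
  · rw [etaCocycle, if_neg hx, norm_div, Complex.norm_real, Real.norm_eq_abs,
      div_le_iff₀ (abs_pos.mpr hx)]
    exact norm_sub_apply_zero_le hh hC x

lemma norm_genLKernel_le (hh : ContDiff ℝ 2 h) (h₁ : ∀ t, ‖deriv h t‖ ≤ C₁)
    (h₂ : ∀ t, ‖deriv (deriv h) t‖ ≤ C₂) (x : ℝ) : ‖genLKernel h x‖ ≤ max C₂ (2 * C₁) := by
  have hC₁ : 0 ≤ C₁ := (norm_nonneg _).trans (h₁ 0)
  have hC₂ : 0 ≤ C₂ := (norm_nonneg _).trans (h₂ 0)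
  rcases eq_or_ne x 0 with rfl | hx
  · simp only [genLKernel, if_true, norm_div, Complex.norm_ofNat]
    linarith [h₂ 0, le_max_left C₂ (2 * C₁)]
  rw [genLKernel, if_neg hx, norm_div, norm_pow, Complex.norm_real, Real.norm_eq_abs, sq_abs,
    div_le_iff₀ (by positivity)]
  rcases le_total |x| 1 with hx1 | hx1
  · refine (norm_taylor_remainder_le hh h₂ x).trans ?_
    gcongr
    exact le_max_left _ _
  · -- for `|x| ≥ 1` the crude first-order bound `2 C₁ |x|` is already `≤ 2 C₁ x²`
    have hxx : |x| ≤ x ^ 2 := by nlinarith [sq_abs x]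
    calc ‖h x - h 0 - (x : ℂ) * deriv h 0‖ ≤ ‖h x - h 0‖ + |x| * ‖deriv h 0‖ := by
          simpa using norm_sub_le (h x - h 0) ((x : ℂ) * deriv h 0)
      _ ≤ C₁ * |x| + |x| * C₁ := by
          gcongr
          exacts [norm_sub_apply_zero_le (hh.differentiable two_ne_zero) h₁ x, h₁ 0]
      _ ≤ max C₂ (2 * C₁) * x ^ 2 := by nlinarith [le_max_right C₂ (2 * C₁)]

end Bounds

section Integrability

variable {h : ℝ → ℂ}

lemma measurable_etaCocycle (hh : Continuous h) : Measurable (etaCocycle h) :=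
  Measurable.ite measurableSet_eq measurable_const
    ((hh.measurable.sub measurable_const).div Complex.measurable_ofReal)

lemma measurable_genLKernel (hh : Continuous h) : Measurable (genLKernel h) :=
  Measurable.ite measurableSet_eq measurable_const
    (((hh.measurable.sub measurable_const).sub (Complex.measurable_ofReal.mul_const _)).div
      (Complex.measurable_ofReal.pow_const 2))

variable {ρ : Measure ℝ} [IsFiniteMeasure ρ] {C₁ C₂ : ℝ}

lemma integrable_genLKernel (hh : ContDiff ℝ 2 h) (h₁ : ∀ t, ‖deriv h t‖ ≤ C₁)
    (h₂ : ∀ t, ‖deriv (deriv h) t‖ ≤ C₂) : Integrable (genLKernel h) ρ :=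
  (integrable_const (max C₂ (2 * C₁))).mono'
    (measurable_genLKernel hh.continuous).aestronglyMeasurable
    (ae_of_all _ (norm_genLKernel_le hh h₁ h₂))

lemma integrable_etaCocycle_mul {k : ℝ → ℂ} (hh : Differentiable ℝ h) (hk : Differentiable ℝ k)
    (h₁ : ∀ t, ‖deriv h t‖ ≤ C₁) (k₁ : ∀ t, ‖deriv k t‖ ≤ C₂) :
    Integrable (fun x => etaCocycle h x * etaCocycle k x) ρ := by
  refine (integrable_const (C₁ * C₂)).mono'
    ((measurable_etaCocycle hh.continuous).mul
      (measurable_etaCocycle hk.continuous)).aestronglyMeasurable (ae_of_all _ fun x => ?_)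
  rw [norm_mul]
  exact mul_le_mul (norm_etaCocycle_le hh h₁ x) (norm_etaCocycle_le hk k₁ x) (norm_nonneg _)
    ((norm_nonneg _).trans (h₁ 0))

end Integrability

lemma conj_etaCocycle_conj (f : ℝ → ℂ) (x : ℝ) :
    conj (etaCocycle (fun t => conj (f t)) x) = etaCocycle f x := by
  rcases eq_or_ne x 0 with rfl | hx
  · simpa [etaCocycle] using congrArg conj (deriv.star (f := f) (x := (0 : ℝ)))
  · simp [etaCocycle, hx]

lemma deriv_deriv_mul {f g : ℝ → ℂ} (hf : ContDiff ℝ 2 f) (hg : ContDiff ℝ 2 g) (x : ℝ) :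
    deriv (deriv (f * g)) x
      = deriv (deriv f) x * g x + 2 * (deriv f x * deriv g x) + f x * deriv (deriv g) x := by
  have hf₁ := hf.differentiable two_ne_zero
  have hg₁ := hg.differentiable two_ne_zero
  have hf₂ := hf.differentiable_deriv_two
  have hg₂ := hg.differentiable_deriv_two
  have hd : deriv (f * g) = fun y => deriv f y * g y + f y * deriv g y :=
    funext fun y => deriv_mul (hf₁ y) (hg₁ y)
  rw [hd, deriv_fun_add (f := fun y => deriv f y * g y) (g := fun y => f y * deriv g y)
    ((hf₂ x).mul (hg₁ x)) ((hf₁ x).mul (hg₂ x)),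
    deriv_fun_mul (hf₂ x) (hg₁ x), deriv_fun_mul (hf₁ x) (hg₂ x)]
  ring

lemma genLKernel_mul {f g : ℝ → ℂ} (hf : ContDiff ℝ 2 f) (hg : ContDiff ℝ 2 g) (x : ℝ) :
    genLKernel (f * g) x
      = f 0 * genLKernel g x + etaCocycle f x * etaCocycle g x + genLKernel f x * g 0 := by
  rcases eq_or_ne x 0 with rfl | hx
  · simp only [genLKernel, etaCocycle, if_true, deriv_deriv_mul hf hg]
    ring
  · simp only [genLKernel, etaCocycle, if_neg hx, Pi.mul_apply,
      deriv_mul (hf.differentiable two_ne_zero 0) (hg.differentiable two_ne_zero 0)]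
    field_simp
    ring

lemma norm_deriv_le_of_sum_le {h : ℝ → ℂ} {C : ℝ}
    (hC : ∀ x, ‖h x‖ + ‖deriv h x‖ + ‖deriv (deriv h) x‖ ≤ C) :
    (∀ x, ‖deriv h x‖ ≤ C) ∧ ∀ x, ‖deriv (deriv h) x‖ ≤ C :=
  ⟨fun x => by linarith [hC x, norm_nonneg (h x), norm_nonneg (deriv (deriv h) x)],
    fun x => by linarith [hC x, norm_nonneg (h x), norm_nonneg (deriv h x)]⟩

theorem genL_coboundary_general
    (a : ℝ) (ρ : Measure ℝ) [IsFiniteMeasure ρ]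
    (f g : ℝ → ℂ) (hf : ContDiff ℝ 2 f) (hg : ContDiff ℝ 2 g)
    (hfb : ∃ C, ∀ x, ‖f x‖ + ‖deriv f x‖ + ‖deriv (deriv f) x‖ ≤ C)
    (hgb : ∃ C, ∀ x, ‖g x‖ + ‖deriv g x‖ + ‖deriv (deriv g) x‖ ≤ C) :
    genL a ρ (f * g)
      = f 0 * genL a ρ g
        + (∫ x : ℝ,
            (starRingEnd ℂ) (etaCocycle (fun t => (starRingEnd ℂ) (f t)) x)
              * etaCocycle g x ∂ρ)
        + genL a ρ f * g 0 := by
  obtain ⟨Cf, hf₁, hf₂⟩ := hfb.imp fun _ => norm_deriv_le_of_sum_le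
  obtain ⟨Cg, hg₁, hg₂⟩ := hgb.imp fun _ => norm_deriv_le_of_sum_le
  have hF : Integrable (genLKernel f) ρ := integrable_genLKernel hf hf₁ hf₂
  have hG : Integrable (genLKernel g) ρ := integrable_genLKernel hg hg₁ hg₂
  have hη : Integrable (fun x => etaCocycle f x * etaCocycle g x) ρ :=
    integrable_etaCocycle_mul (hf.differentiable two_ne_zero) (hg.differentiable two_ne_zero)
      hf₁ hg₁
  simp only [conj_etaCocycle_conj, genL_eq_integral_genLKernel]
  rw [integral_congr_ae (ae_of_all _ (genLKernel_mul hf hg)),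
    integral_add ?_ (hF.mul_const _), integral_add (hG.const_mul _) hη,
    integral_const_mul, integral_mul_const,
    deriv_mul (hf.differentiable two_ne_zero 0) (hg.differentiable two_ne_zero 0)]
  · ring
  · exact (hG.const_mul _).add hη

/-- The coboundary identity
`L(fg) = f(0) L(g) + ⟨η(f̄), η(g)⟩_{L²(ρ)} + L(f) g(0)` for `f, g ∈ C_b²(ℝ)`. -/
theorem genL_coboundary
    (a : ℝ) (ρ : Measure ℝ) [IsFiniteMeasure ρ]
    (hK : ∃ K : Set ℝ, IsCompact K ∧ ρ Kᶜ = 0)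
    (f g : ℝ → ℂ) (hf : ContDiff ℝ 2 f) (hg : ContDiff ℝ 2 g)
    (hfb : ∃ C, ∀ x, ‖f x‖ + ‖deriv f x‖ + ‖deriv (deriv f) x‖ ≤ C)
    (hgb : ∃ C, ∀ x, ‖g x‖ + ‖deriv g x‖ + ‖deriv (deriv g) x‖ ≤ C) :
    genL a ρ (f * g)
      = f 0 * genL a ρ g
        + (∫ x : ℝ,
            (starRingEnd ℂ) (etaCocycle (fun t => (starRingEnd ℂ) (f t)) x)
              * etaCocycle g x ∂ρ)
        + genL a ρ f * g 0 :=
  genL_coboundary_general a ρ f g hf hg hfb hgb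
end

section
/- For t > 0, let μ_t be the probability measure on ℝ with density x ↦ 1/(π√(2t − x²)) on the interval (−√(2t), √(2t)) (the arcsine law). Then the reciprocal Cauchy transform of μ_t satisfies H_{μ_t}(z) = √(z² − 2t) for all z ∈ ℂ⁺, where the square root is the analytic branch on ℂ⁺ with H_{μ_t}(z) ~ z at infinity. Equivalently, ∫ (z−x)⁻¹ dμ_t(x) = 1/√(z² − 2t). -/
/-!
Substituting `x = r cos θ` with `r = √(2t)` turns `μ_t` into the uniform law of `θ` on `(0, π)`,
and since `cos` is symmetric about `π`, `G_{μ_t}(z)` is `1/(2π)` times the integral of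
`(z - r cos θ)⁻¹` over a full period. With `u = e^{iθ}` this becomes a contour integral over
the unit circle of `2i / (r (u - a) (u - b))`, where `a = (z - w)/r` and `b = (z + w)/r` are the
roots of `u² - (2z/r) u + 1`. As `ab = 1` and `Im z, Im w > 0` force `|z - w| < |z + w|`, only
`a` lies inside the disc, and Cauchy's formula gives `2π/w`.
-/

open MeasureTheory Set Real

section ArcsineSubstitution

variable {E : Type*} [NormedAddCommGroup E] [NormedSpace ℝ E] {r : ℝ}

theorem image_mul_cos_Ioo_zero_pi (hr : 0 < r) :
    (fun θ => r * cos θ) '' Ioo 0 π = Ioo (-r) r := by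
  ext x
  constructor
  · rintro ⟨θ, ⟨h0, hπ⟩, rfl⟩
    have hmem : θ ∈ Icc 0 π := ⟨h0.le, hπ.le⟩
    have hlt : cos θ < 1 := by
      simpa using strictAntiOn_cos ⟨le_rfl, pi_pos.le⟩ hmem h0
    have hgt : -1 < cos θ := by
      simpa using strictAntiOn_cos hmem ⟨pi_pos.le, le_rfl⟩ hπ
    constructor <;> nlinarith
  · rintro ⟨hlo, hhi⟩
    have hlo' : -1 < x / r := by rw [lt_div_iff₀ hr]; linarith
    have hhi' : x / r < 1 := by rwa [div_lt_one hr]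
    refine ⟨arccos (x / r), ⟨arccos_pos.2 hhi', arccos_lt_pi.2 hlo'⟩, ?_⟩
    simp only [cos_arccos hlo'.le hhi'.le]
    field_simp

theorem setIntegral_Ioo_inv_sqrt_sq_sub_sq_smul (hr : 0 < r) (g : ℝ → E) :
    ∫ x in Ioo (-r) r, (√(r ^ 2 - x ^ 2))⁻¹ • g x = ∫ θ in 0..π, g (r * cos θ) := by
  have hderiv : ∀ θ ∈ Ioo 0 π,
      HasDerivWithinAt (fun θ => r * cos θ) (r * -sin θ) (Ioo 0 π) θ :=
    fun θ _ => ((hasDerivAt_cos θ).const_mul r).hasDerivWithinAt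
  have hinj : InjOn (fun θ => r * cos θ) (Ioo 0 π) := fun a ha b hb hab =>
    injOn_cos (Ioo_subset_Icc_self ha) (Ioo_subset_Icc_self hb) (mul_left_cancel₀ hr.ne' hab)
  rw [← image_mul_cos_Ioo_zero_pi hr,
    integral_image_eq_integral_abs_deriv_smul measurableSet_Ioo hderiv hinj,
    intervalIntegral.integral_of_le pi_pos.le, integral_Ioc_eq_integral_Ioo]
  refine setIntegral_congr_fun measurableSet_Ioo fun θ hθ => ?_
  have hsin : 0 < r * sin θ := mul_pos hr (sin_pos_of_pos_of_lt_pi hθ.1 hθ.2)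
  have hsqrt : √(r ^ 2 - (r * cos θ) ^ 2) = r * sin θ := by
    rw [← sqrt_sq hsin.le]
    congr 1
    linear_combination -r ^ 2 * sin_sq_add_cos_sq θ
  rw [hsqrt, smul_smul, mul_neg, abs_neg, abs_of_pos hsin, mul_inv_cancel₀ hsin.ne', one_smul]

theorem integral_withDensity_arcsine (hr : 0 < r) (g : ℝ → E) :
    ∫ x, g x ∂(volume.restrict (Ioo (-r) r)).withDensity
        (fun x => ENNReal.ofReal (1 / (π * √(r ^ 2 - x ^ 2)))) =
      π⁻¹ • ∫ θ in 0..π, g (r * cos θ) := by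
  rw [integral_withDensity_eq_integral_toReal_smul (by fun_prop)
    (ae_of_all _ fun _ => ENNReal.ofReal_lt_top)]
  simp_rw [ENNReal.toReal_ofReal (one_div_nonneg.2 (mul_nonneg pi_pos.le (sqrt_nonneg _))),
    one_div, mul_inv, mul_smul]
  rw [integral_smul, setIntegral_Ioo_inv_sqrt_sq_sub_sq_smul hr]

theorem intervalIntegral_comp_cos_zero_two_pi {f : ℝ → E}
    (hf : IntervalIntegrable (fun θ => f (cos θ)) volume 0 (2 * π)) :
    ∫ θ in 0..2 * π, f (cos θ) = (2 : ℝ) • ∫ θ in 0..π, f (cos θ) := by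
  have hπ : π ∈ uIcc 0 (2 * π) := by
    rw [uIcc_of_le (by positivity)]
    constructor <;> linarith [pi_pos]
  have hreflect : ∫ θ in π..2 * π, f (cos θ) = ∫ θ in 0..π, f (cos θ) := by
    have := intervalIntegral.integral_comp_sub_left (fun θ => f (cos θ)) (a := 0) (b := π) (2 * π)
    simp only [cos_two_pi_sub, sub_zero, show 2 * π - π = π by ring] at this
    exact this.symm
  rw [← intervalIntegral.integral_add_adjacent_intervals (hf.mono_set (uIcc_subset_uIcc_left hπ))
    (hf.mono_set (uIcc_subset_uIcc_right hπ)), hreflect, two_smul]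

end ArcsineSubstitution

section ContourIntegral

variable {r : ℝ} {z w : ℂ}

theorem norm_sub_lt_norm_add_of_sq_eq_sq_sub_ofReal (hz : 0 < z.im) (hw : 0 < w.im) {c : ℝ}
    (h : w ^ 2 = z ^ 2 - c) : ‖z - w‖ < ‖z + w‖ := by
  have him : w.re * w.im = z.re * z.im := by
    have := congrArg Complex.im h
    simp only [pow_two, Complex.mul_im, Complex.sub_im, Complex.ofReal_im] at this
    linarith
  -- `Re w` and `Re z` have the same sign, so `Re (z * conj w) > 0`.
  have hre : 0 ≤ z.re * w.re := by
    have : z.re * w.re * w.im = z.re ^ 2 * z.im := by rw [mul_assoc, him]; ring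
    nlinarith [mul_nonneg (sq_nonneg z.re) hz.le]
  rw [← sq_lt_sq₀ (norm_nonneg _) (norm_nonneg _), Complex.sq_norm, Complex.sq_norm,
    Complex.normSq_apply, Complex.normSq_apply]
  simp only [Complex.sub_re, Complex.sub_im, Complex.add_re, Complex.add_im]
  nlinarith

theorem norm_sub_lt_of_sq_eq_sq_sub_sq (hr : 0 < r) (hz : 0 < z.im) (hw : 0 < w.im)
    (h : w ^ 2 = z ^ 2 - r ^ 2) : ‖z - w‖ < r := by
  have hlt := norm_sub_lt_norm_add_of_sq_eq_sq_sub_ofReal hz hw (c := r ^ 2)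
    (by push_cast; exact h)
  have hprod : ‖z - w‖ * ‖z + w‖ = r ^ 2 := by
    rw [← norm_mul, show (z - w) * (z + w) = (r : ℂ) ^ 2 by linear_combination -h]
    simp [abs_of_pos hr]
  nlinarith [norm_nonneg (z - w)]

theorem ofReal_cos_eq_circleMap (θ : ℝ) :
    (cos θ : ℂ) = (circleMap 0 1 θ + (circleMap 0 1 θ)⁻¹) / 2 := by
  simp [circleMap, ← Complex.exp_neg, Complex.cos]

theorem sub_mul_add_inv_div_two_eq (hr : r ≠ 0) (h : w ^ 2 = z ^ 2 - r ^ 2) {u : ℂ}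
    (hu : u ≠ 0) :
    z - r * ((u + u⁻¹) / 2) = -(r / (2 * u)) * ((u - (z - w) / r) * (u - (z + w) / r)) := by
  have hr' : (r : ℂ) ≠ 0 := by exact_mod_cast hr
  field_simp
  linear_combination -h

theorem inv_sub_mul_cos_eq_circleMap (hr : r ≠ 0) (h : w ^ 2 = z ^ 2 - r ^ 2) (θ : ℝ) :
    (z - ↑(r * cos θ))⁻¹ = deriv (circleMap 0 1) θ • ((circleMap 0 1 θ - (z - w) / r)⁻¹ •
      (2 * Complex.I / r * (circleMap 0 1 θ - (z + w) / r)⁻¹)) := by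
  set u := circleMap 0 1 θ
  rw [deriv_circleMap, Complex.ofReal_mul, ofReal_cos_eq_circleMap,
    sub_mul_add_inv_div_two_eq hr h (circleMap_ne_center one_ne_zero), mul_inv, mul_inv, inv_neg,
    inv_div, smul_eq_mul, smul_eq_mul]
  linear_combination
    (-(2 * u / r) * (u - (z - w) / r)⁻¹ * (u - (z + w) / r)⁻¹) * Complex.I_sq

theorem intervalIntegral_inv_sub_mul_cos (hr : 0 < r) (h : w ^ 2 = z ^ 2 - r ^ 2)
    (hzw : ‖z - w‖ < r) :
    ∫ θ in 0..2 * π, (z - ↑(r * cos θ))⁻¹ = 2 * π / w := by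
  have hr' : (r : ℂ) ≠ 0 := by exact_mod_cast hr.ne'
  set a := (z - w) / r
  set b := (z + w) / r
  have hab : a * b = 1 := by
    simp only [a, b]; field_simp; linear_combination -h
  have ha : a ∈ Metric.ball (0 : ℂ) 1 := by
    rw [mem_ball_zero_iff, norm_div, Complex.norm_real, norm_of_nonneg hr.le, div_lt_one hr]
    exact hzw
  have hb : ∀ ζ ∈ Metric.closedBall (0 : ℂ) 1, ζ - b ≠ 0 := by
    intro ζ hζ hζb
    rw [sub_eq_zero.1 hζb, mem_closedBall_zero_iff] at hζ
    have : ‖a‖ * ‖b‖ = 1 := by rw [← norm_mul, hab, norm_one]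
    rw [mem_ball_zero_iff] at ha
    nlinarith [norm_nonneg a]
  have hf : DifferentiableOn ℂ (fun ζ => 2 * Complex.I / r * (ζ - b)⁻¹) (Metric.closedBall 0 1) :=
    (differentiableOn_const _).mul ((differentiableOn_id.sub_const b).inv hb)
  have hcauchy := hf.circleIntegral_sub_inv_smul ha
  have hab' : a - b = -2 * w / r := by simp only [a, b]; ring
  rw [circleIntegral] at hcauchy
  rw [intervalIntegral.integral_congr fun θ _ => inv_sub_mul_cos_eq_circleMap hr.ne' h θ,
    hcauchy, hab', inv_div, smul_eq_mul]
  field_simp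
  rw [Complex.I_sq]
  ring

end ContourIntegral

/-- The arcsine law `μ_t` with density `1/(π √(2t − x²))` on `(−√(2t), √(2t))` has Cauchy
transform `G_{μ_t}(z) = 1/√(z² − 2t)` on `ℂ⁺`, where the square root is the analytic
branch on `ℂ⁺` with positive imaginary part (i.e. `H_{μ_t}(z) = √(z² − 2t)`). -/
theorem arcsine_cauchy_transform
    (t : ℝ) (ht : 0 < t) (μ : Measure ℝ)
    (hμ : μ = (volume.restrict
        (Set.Ioo (-Real.sqrt (2 * t)) (Real.sqrt (2 * t)))).withDensity
        (fun x => ENNReal.ofReal (1 / (Real.pi * Real.sqrt (2 * t - x ^ 2)))))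
    (z w : ℂ) (hz : 0 < z.im) (hw : 0 < w.im) (hw2 : w ^ 2 = z ^ 2 - 2 * (t : ℂ)) :
    ∫ x : ℝ, (z - (x : ℂ))⁻¹ ∂μ = w⁻¹ := by
  set r := √(2 * t)
  have hr : 0 < r := sqrt_pos.2 (by positivity)
  have hr2 : r ^ 2 = 2 * t := sq_sqrt (by positivity)
  have hwr : w ^ 2 = z ^ 2 - (r : ℂ) ^ 2 := by
    rw [hw2, show (r : ℂ) ^ 2 = 2 * t by exact_mod_cast hr2]
  have hne : ∀ x : ℝ, z - (x : ℂ) ≠ 0 := fun x hx => by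
    rw [sub_eq_zero.1 hx, Complex.ofReal_im] at hz
    exact hz.false
  have hcont : Continuous fun x : ℝ => (z - (x : ℂ))⁻¹ := Continuous.inv₀ (by fun_prop) hne
  have hfull :=
    intervalIntegral_inv_sub_mul_cos hr hwr (norm_sub_lt_of_sq_eq_sq_sub_sq hr hz hw hwr)
  have hint : IntervalIntegrable (fun θ => (z - ↑(r * cos θ))⁻¹) volume 0 (2 * π) :=
    (hcont.comp (continuous_const.mul continuous_cos)).intervalIntegrable _ _
  rw [intervalIntegral_comp_cos_zero_two_pi (f := fun x : ℝ => (z - ((r * x : ℝ) : ℂ))⁻¹) hint]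
    at hfull
  have hhalf : ∫ θ in 0..π, (z - ↑(r * cos θ))⁻¹ = π / w := by
    rw [Complex.real_smul, Complex.ofReal_ofNat] at hfull
    linear_combination hfull / 2
  rw [← hr2] at hμ
  rw [hμ, integral_withDensity_arcsine hr, hhalf, Complex.real_smul, Complex.ofReal_inv]
  field_simp [Complex.ofReal_ne_zero.2 pi_ne_zero]
end

section
/- Let (H_t)_{t≥0} be a composition semigroup of reciprocal Cauchy transforms of a nontrivial monotone convolution semigroup with generator A, characterized by: for each z ∈ ℂ⁺ and t ≥ 0, w = H_t(z) is the unique solution in ℂ⁺ of ∫_z^w dζ/A(ζ) = t. Then each H_t is injective on ℂ⁺. -/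
open MeasureTheory

/-- Each reciprocal Cauchy transform `H_t` of a non-trivial monotone convolution
semigroup is injective on the upper half plane. Here the semigroup is characterized, via
a primitive `F` of `1/A` (so that `∫_z^w dζ/A(ζ) = F(w) − F(z)`), by: `H_t(z)` is the
unique `w ∈ ℂ⁺` with `F(w) − F(z) = t`, where `A(z) = a + ∫ (x−z)⁻¹ dρ(x)` and
`(a, ρ) ≠ (0, 0)`. -/
theorem reciprocalCauchy_semigroup_injective
    (a : ℝ) (ρ : Measure ℝ) [IsFiniteMeasure ρ]
    (hK : ∃ K : Set ℝ, IsCompact K ∧ ρ Kᶜ = 0)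
    (hpair : ¬(a = 0 ∧ ρ = 0))
    (F : ℂ → ℂ)
    (hF : ∀ z : ℂ, 0 < z.im →
      HasDerivAt F ((a : ℂ) + ∫ x : ℝ, ((x : ℂ) - z)⁻¹ ∂ρ)⁻¹ z)
    (Hfun : ℝ → ℂ → ℂ)
    (hH0 : ∀ z : ℂ, 0 < z.im → Hfun 0 z = z)
    (hHchar : ∀ t : ℝ, 0 ≤ t → ∀ z : ℂ, 0 < z.im →
      0 < (Hfun t z).im ∧ F (Hfun t z) - F z = (t : ℂ) ∧
        ∀ w : ℂ, 0 < w.im → F w - F z = (t : ℂ) → w = Hfun t z) :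
    ∀ t : ℝ, 0 ≤ t → Set.InjOn (Hfun t) {z : ℂ | 0 < z.im} := by
  intro t ht z₁ hz₁ z₂ hz₂ heq
  obtain ⟨-, h1, -⟩ := hHchar t ht z₁ hz₁
  obtain ⟨-, h2, -⟩ := hHchar t ht z₂ hz₂
  have hFz : F z₂ - F z₁ = (0 : ℝ) := by
    push_cast
    have := h1.trans h2.symm
    rw [heq] at this
    linear_combination this
  obtain ⟨-, -, huniq⟩ := hHchar 0 le_rfl z₁ hz₁
  have := huniq z₂ hz₂ hFz
  rw [hH0 z₁ hz₁] at this
  exact this.symm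
end
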